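/- Let n ≥ 1, let ω ∈ ℂ be a primitive n-th root of unity, and let the Fourier n × n matrix have rows E_0, …, E_{n-1} with E_i = (ω^{i·0}, ω^{i·1}, …, ω^{i·(n-1)}) ∈ ℂ^n. Let 1 ≤ u < n, let k ≥ 1 satisfy gcd(n, k) = 1, and let j_1, …, j_u ∈ {0, …, n-1} with j_{l+1} ≡ j_l + k (mod n) for l = 1, …, u−1. Let C^⊥ = span{E_{j_1}, …, E_{j_u}} ⊆ ℂ^n and let 𝒞 = (C^⊥)^⊥ be its dual code. Then 𝒞 is an MDS (n, n−u, u+1) code: dim 𝒞 = n − u and the minimum distance of 𝒞 equals u + 1. -/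

import Mathlib

/-! Since `j_l ≡ j₀ + l k (mod n)`, a codeword `x` satisfies `∑ m, y m * (ω ^ (k m)) ^ l = 0` for
`l < u`, where `y m = x m * ω ^ (j₀ m)`; the nodes `ω ^ (k m)` are distinct because `ω ^ k` is again
a primitive `n`-th root of unity. A nonzero codeword of weight at most `u` would give a nonzero
solution of a square Vandermonde system, so the minimum distance is at least `u + 1`. The code is
cut out by `u` equations, so its dimension is at least `n - u`, and the Singleton bound
`d + dim ≤ n + 1` forces dimension `n - u` and minimum distance `u + 1`. -/

open Finset

noncomputable section

/-- The componentwise (star) product on `Fin n → F`. -/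
def starMul {F : Type*} [Mul F] {n : ℕ} (u v : Fin n → F) : Fin n → F :=
  fun i => u i * v i

/-- The standard bilinear form `⟨u,v⟩ = ∑ i, u i * v i` on `Fin n → F`. -/
def bil {F : Type*} [Semiring F] {n : ℕ} (u v : Fin n → F) : F :=
  ∑ i, u i * v i

/-- The Hamming weight of a vector: the number of its nonzero coordinates. -/
def hWeight {F : Type*} [Zero F] {n : ℕ} (v : Fin n → F) : ℕ :=
  Set.ncard {i | v i ≠ 0}

/-- The dual code of a linear code `C ⊆ F^n` with respect to `⟨u,v⟩ = ∑ i, u i * v i`. -/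
def dualCode {F : Type*} [Field F] {n : ℕ} (C : Submodule F (Fin n → F)) :
    Submodule F (Fin n → F) where
  carrier := {x | ∀ c ∈ C, bil x c = 0}
  zero_mem' := by
    intro c hc
    simp [bil]
  add_mem' := by
    intro a b ha hb c hc
    have h : bil (a + b) c = bil a c + bil b c := by
      simp only [bil, Pi.add_apply, add_mul]
      exact Finset.sum_add_distrib
    simp only [Set.mem_setOf_eq] at ha hb ⊢
    rw [h, ha c hc, hb c hc, add_zero]
  smul_mem' := by
    intro r a ha c hc
    have h : bil (r • a) c = r * bil a c := by
      simp only [bil, Pi.smul_apply, smul_eq_mul, Finset.mul_sum, mul_assoc]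
    simp only [Set.mem_setOf_eq] at ha ⊢
    rw [h, ha c hc, mul_zero]

/-- The minimum distance of a code: the least Hamming weight of a nonzero codeword. -/
def minDist {F : Type*} [Field F] {n : ℕ} (C : Submodule F (Fin n → F)) : ℕ :=
  sInf {d | ∃ c ∈ C, c ≠ 0 ∧ hWeight c = d}

/-- A code is MDS if its minimum distance equals `n - dim + 1`. -/
def IsMDS {F : Type*} [Field F] {n : ℕ} (C : Submodule F (Fin n → F)) : Prop :=
  minDist C = n - Module.finrank F C + 1

/-- `U*V`: the span of all componentwise products `u*v` with `u ∈ U`, `v ∈ V`. -/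
def starSpan {F : Type*} [Field F] {n : ℕ} (U V : Submodule F (Fin n → F)) :
    Submodule F (Fin n → F) :=
  Submodule.span F {w | ∃ u ∈ U, ∃ v ∈ V, w = starMul u v}

/-- `(U, V)` is a `t`-error correcting pair for `C`. -/
def IsECP {F : Type*} [Field F] {n : ℕ} (t : ℕ) (U V C : Submodule F (Fin n → F)) : Prop :=
  starSpan U V ≤ dualCode C ∧
  t < Module.finrank F U ∧
  n < minDist U + minDist C ∧
  t < minDist (dualCode V)

section Codes

variable {F : Type*} [Field F] {n : ℕ}

lemma mem_dualCode_span_range_iff {ι : Type*} (E : ι → Fin n → F) (x : Fin n → F) :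
    x ∈ dualCode (Submodule.span F (Set.range E)) ↔ ∀ l, bil x (E l) = 0 := by
  change (∀ c ∈ Submodule.span F (Set.range E), dotProductBilin F F x c = 0) ↔
    ∀ l, dotProductBilin F F x (E l) = 0
  simp_rw [← LinearMap.mem_ker]
  exact SetLike.le_def.symm.trans (Submodule.span_le.trans Set.range_subset_iff)

lemma dualCode_span_range_eq_ker {ι : Type*} [Fintype ι] (E : ι → Fin n → F) :
    dualCode (Submodule.span F (Set.range E)) = LinearMap.ker (Matrix.of E).mulVecLin := by
  ext x
  rw [mem_dualCode_span_range_iff, LinearMap.mem_ker, funext_iff]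
  exact forall_congr' fun l => by rw [bil, ← dotProduct, dotProduct_comm]; rfl

lemma sub_card_le_finrank_dualCode_span_range {ι : Type*} [Fintype ι] (E : ι → Fin n → F) :
    n - Fintype.card ι ≤ Module.finrank F (dualCode (Submodule.span F (Set.range E))) := by
  have hrank := LinearMap.finrank_range_add_finrank_ker (Matrix.of E).mulVecLin
  have hrange := (LinearMap.range (Matrix.of E).mulVecLin).finrank_le
  rw [Module.finrank_fin_fun] at hrank
  rw [Module.finrank_fintype_fun_eq_card] at hrange
  rw [dualCode_span_range_eq_ker]
  omega

lemma exists_ne_zero_hWeight_add_finrank_le (C : Submodule F (Fin n → F))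
    (hC : 0 < Module.finrank F C) :
    ∃ c ∈ C, c ≠ 0 ∧ hWeight c + Module.finrank F C ≤ n + 1 := by
  set r := Module.finrank F C
  have hrn : r ≤ n := by simpa using C.finrank_le
  have hle : r - 1 ≤ n := by omega
  -- a nonzero codeword vanishing on the first `r - 1` coordinates
  let restrict : C →ₗ[F] Fin (r - 1) → F :=
    LinearMap.funLeft F F (Fin.castLE hle) ∘ₗ C.subtype
  have hker : LinearMap.ker restrict ≠ ⊥ :=
    LinearMap.ker_ne_bot_of_finrank_lt (by rw [Module.finrank_fin_fun]; omega)
  obtain ⟨⟨c, hcC⟩, hc, hc0⟩ := Submodule.exists_mem_ne_zero_of_ne_bot hker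
  have hvanish : ∀ i, c (Fin.castLE hle i) = 0 := fun i => congrFun hc i
  have hsupp : {m | c m ≠ 0} ⊆ (Set.range (Fin.castLE hle))ᶜ := by
    rintro m hm ⟨i, rfl⟩
    exact hm (hvanish i)
  have hcompl := Set.ncard_add_ncard_compl (Set.range (Fin.castLE hle))
  rw [Set.ncard_range_of_injective (Fin.castLE_injective hle)] at hcompl
  simp only [Nat.card_fin] at hcompl
  refine ⟨c, hcC, fun h => hc0 (Subtype.ext h), ?_⟩
  have := Set.ncard_le_ncard hsupp
  unfold hWeight
  omega

lemma minDist_eq_of_forall_le_hWeight {C : Submodule F (Fin n → F)} {c : Fin n → F} {d : ℕ}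
    (hc : c ∈ C) (hc0 : c ≠ 0) (hcd : hWeight c = d)
    (hd : ∀ x ∈ C, x ≠ 0 → d ≤ hWeight x) : minDist C = d := by
  have hmem : d ∈ {d | ∃ c ∈ C, c ≠ 0 ∧ hWeight c = d} := ⟨c, hc, hc0, hcd⟩
  refine le_antisymm (Nat.sInf_le hmem) (le_csInf ⟨d, hmem⟩ ?_)
  rintro _ ⟨x, hx, hx0, rfl⟩
  exact hd x hx hx0

theorem finrank_dualCode_span_range_and_minDist {ι : Type*} [Fintype ι] (E : ι → Fin n → F)
    (hn : Fintype.card ι < n)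
    (hw : ∀ x ∈ dualCode (Submodule.span F (Set.range E)), x ≠ 0 →
      Fintype.card ι + 1 ≤ hWeight x) :
    Module.finrank F (dualCode (Submodule.span F (Set.range E))) = n - Fintype.card ι ∧
      minDist (dualCode (Submodule.span F (Set.range E))) = Fintype.card ι + 1 := by
  have hdim := sub_card_le_finrank_dualCode_span_range E
  obtain ⟨c, hc, hc0, hsingleton⟩ := exists_ne_zero_hWeight_add_finrank_le
    (dualCode (Submodule.span F (Set.range E))) (by omega)
  have hcw := hw c hc hc0
  exact ⟨by omega, minDist_eq_of_forall_le_hWeight hc hc0 (by omega) hw⟩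

end Codes

section Vandermonde

variable {R : Type*} [CommRing R] [IsDomain R] {ι : Type*} [Fintype ι] {f v : ι → R}

theorem eq_zero_of_forall_lt_card_sum_mul_pow_eq_zero (hf : Function.Injective f)
    (hfv : ∀ l < Fintype.card ι, ∑ j, v j * f j ^ l = 0) : v = 0 := by
  let e := Fintype.equivFin ι
  have hv : v ∘ e.symm = 0 :=
    Matrix.eq_zero_of_forall_pow_sum_mul_pow_eq_zero (hf.comp e.symm.injective) fun l => by
      rw [← hfv l l.isLt]
      exact e.symm.sum_comp fun j => v j * f j ^ (l : ℕ)
  funext j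
  simpa using congrFun hv (e j)

theorem eq_zero_of_forall_lt_sum_mul_pow_eq_zero_of_ncard_le (hf : Function.Injective f) {u : ℕ}
    (hw : {j | v j ≠ 0}.ncard ≤ u) (hfv : ∀ l < u, ∑ j, v j * f j ^ l = 0) : v = 0 := by
  classical
  have hcard : Fintype.card {j // v j ≠ 0} = {j | v j ≠ 0}.ncard := by
    rw [← Nat.card_eq_fintype_card, ← Nat.card_coe_set_eq]
    rfl
  have hsum : ∀ l, ∑ j : {j // v j ≠ 0}, v j * f j ^ l = ∑ j, v j * f j ^ l := fun l => by
    rw [← Fintype.sum_subtype_add_sum_subtype (fun j => v j ≠ 0), left_eq_add]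
    exact Finset.sum_eq_zero fun j _ => by rw [not_not.mp j.2, zero_mul]
  have hv := eq_zero_of_forall_lt_card_sum_mul_pow_eq_zero (f := fun j : {j // v j ≠ 0} => f j)
    (v := fun j => v j) (hf.comp Subtype.val_injective)
    fun l hl => (hsum l).trans (hfv l (by omega))
  funext j
  by_contra hj
  exact hj (congrFun hv ⟨j, hj⟩)

end Vandermonde

section Fourier

lemma exists_modEq_add_mul {n k u : ℕ} {a : Fin u → ℕ}
    (ha : ∀ (l : ℕ) (h : l + 1 < u), a ⟨l + 1, h⟩ ≡ a ⟨l, by omega⟩ + k [MOD n]) :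
    ∃ a₀, ∀ l : Fin u, a l ≡ a₀ + l * k [MOD n] := by
  cases u with
  | zero => exact ⟨0, fun l => l.elim0⟩
  | succ u =>
    refine ⟨a 0, fun ⟨l, hl⟩ => ?_⟩
    induction l with
    | zero => simp [Nat.ModEq.refl]
    | succ l ih =>
      refine (ha l hl).trans ?_
      simpa [add_mul, add_assoc] using (ih (by omega)).add_right k

variable {F : Type*} [Field F] {n : ℕ} {ω : F}

theorem le_hWeight_of_mem_dualCode_span_fourierRows (hω : IsPrimitiveRoot ω n) {k j₀ u : ℕ}
    (hkn : Nat.Coprime n k) {jj : Fin u → Fin n}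
    (hjj : ∀ l : Fin u, (jj l : ℕ) ≡ j₀ + l * k [MOD n]) {x : Fin n → F}
    (hx : x ∈ dualCode (Submodule.span F
      (Set.range fun l : Fin u => fun m : Fin n => ω ^ ((jj l : ℕ) * (m : ℕ)))))
    (hx0 : x ≠ 0) : u + 1 ≤ hWeight x := by
  by_contra! hw
  obtain ⟨m₀, -⟩ := Function.ne_iff.mp hx0
  have hω0 : ω ≠ 0 := hω.ne_zero m₀.pos.ne'
  have hnodes : Function.Injective fun m : Fin n => ω ^ (k * m) := fun a b h =>
    Fin.ext <| (hω.pow_of_coprime k hkn.symm).pow_inj a.isLt b.isLt <| by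
      simpa only [pow_mul] using h
  -- `ω ^ ((j₀ + l k) m) = ω ^ (j₀ m) * (ω ^ (k m)) ^ l`:
  -- a Vandermonde system in the nodes `ω ^ (k m)`
  have hy := eq_zero_of_forall_lt_sum_mul_pow_eq_zero_of_ncard_le hnodes
    (v := fun m => x m * ω ^ (j₀ * m)) (u := u) (by simpa [hWeight, hω0] using Nat.le_of_lt_succ hw)
    fun l hl => by
      rw [← (mem_dualCode_span_range_iff _ x).mp hx ⟨l, hl⟩, bil]
      refine Finset.sum_congr rfl fun m _ => ?_
      rw [pow_eq_pow_of_modEq ((hjj ⟨l, hl⟩).mul_right _) hω.pow_eq_one]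
      ring
  exact hx0 (funext fun m => by simpa [hω0] using congrFun hy m)

end Fourier

/-- with `C^⊥` spanned by Fourier rows `E_{j_1},…,E_{j_u}` evenly spaced
mod `n` with difference `k`, `gcd(n,k)=1`, the dual code `𝒞 = (C^⊥)^⊥` is an MDS
`(n, n-u, u+1)` code. -/
theorem stmt10 (n : ℕ) (ω : ℂ) (hω : IsPrimitiveRoot ω n)
    (u : ℕ) (hun : u < n)
    (k : ℕ) (hkn : Nat.gcd n k = 1)
    (jj : Fin u → Fin n)
    (hjj : ∀ (l : ℕ) (h : l + 1 < u),
      ((jj ⟨l + 1, h⟩ : ℕ)) ≡ ((jj ⟨l, by omega⟩ : ℕ)) + k [MOD n])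
    (𝒞 : Submodule ℂ (Fin n → ℂ))
    (h𝒞 : 𝒞 = dualCode (Submodule.span ℂ
      (Set.range fun l : Fin u => fun m : Fin n => ω ^ ((jj l : ℕ) * (m : ℕ))))) :
    Module.finrank ℂ 𝒞 = n - u ∧ minDist 𝒞 = u + 1 := by
  subst h𝒞
  obtain ⟨j₀, hj₀⟩ := exists_modEq_add_mul (a := fun l => (jj l : ℕ)) hjj
  have h := finrank_dualCode_span_range_and_minDist
    (fun l : Fin u => fun m : Fin n => ω ^ ((jj l : ℕ) * (m : ℕ))) (by rwa [Fintype.card_fin])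
    (by
      rw [Fintype.card_fin]
      exact fun x => le_hWeight_of_mem_dualCode_span_fourierRows hω hkn hj₀)
  rwa [Fintype.card_fin] at h
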